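/- (Shift invariance of the Lagrange system) Let A be a pairwise reciprocal matrix of size n ≥ 1 and let r ∈ ℝ. Then the system (Ḡ + r·J).mulVec w + λ • 1 = 0, ∑ᵢ w i = 1 has a unique solution (w, λ), and its w-component is independent of r: w = w* = (1/c) • (G⁻¹.mulVec 1) with c = ∑ᵢ ∑ⱼ (G⁻¹) i j, while λ = (1 − 1/c) − r; only the Lagrange multiplier changes with the shift r. -/

import Mathlib

open Matrix BigOperators

/-- A pairwise reciprocal matrix (PRM): all entries positive and `A i j * A j i = 1`. -/
def IsPRM {n : ℕ} (A : Matrix (Fin n) (Fin n) ℝ) : Prop :=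
  ∀ i j, 0 < A i j ∧ A i j * A j i = 1

/-- The matrix `Ḡ` with diagonal `(n-1) + ∑_{k ≠ i} (A k i)^2` and
off-diagonal `-(A i j + A j i)`. -/
noncomputable def Gbar {n : ℕ} (A : Matrix (Fin n) (Fin n) ℝ) :
    Matrix (Fin n) (Fin n) ℝ :=
  Matrix.of fun i j =>
    if i = j then ((n : ℝ) - 1) + ∑ k ∈ Finset.univ.filter (fun k => k ≠ i), (A k i) ^ 2
    else -(A i j + A j i)

/-- The all-ones matrix `J`. -/
noncomputable def Jmat (n : ℕ) : Matrix (Fin n) (Fin n) ℝ :=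
  Matrix.of fun _ _ => 1

/-- `G = Ḡ + J`. -/
noncomputable def Gmat {n : ℕ} (A : Matrix (Fin n) (Fin n) ℝ) :
    Matrix (Fin n) (Fin n) ℝ :=
  Gbar A + Jmat n

/-- The weighted least squares objective `f(w) = ∑ i ∑ j (w i - A i j * w j)^2`. -/
noncomputable def wls {n : ℕ} (A : Matrix (Fin n) (Fin n) ℝ) (w : Fin n → ℝ) : ℝ :=
  ∑ i, ∑ j, (w i - A i j * w j) ^ 2

/-!
The quadratic form of `Ḡ` is the weighted least squares objective,
`xᵀ Ḡ x = ∑ᵢ ∑ⱼ (xᵢ - aᵢⱼ xⱼ)²`, so `xᵀ G x = f(x) + (∑ᵢ xᵢ)²`.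
If both terms vanish then `xᵢ = aᵢₖ xₖ` for all `i`, and `0 = ∑ᵢ xᵢ = (∑ᵢ aᵢₖ) xₖ` with a positive
column sum, so `G` is positive definite and `c = 1ᵀ G⁻¹ 1 > 0`.
On the hyperplane `∑ᵢ wᵢ = 1` we have `J w = 1`, so the shift `r • J` only moves the right-hand
side by `r • 1` and is absorbed by the multiplier: the system becomes `G w = (1 - r - λ) • 1`,
whose solutions are the multiples `μ • G⁻¹ 1`, and the constraint forces `μ = 1 / c`.
-/

lemma IsPRM.diag_eq_one {n : ℕ} {A : Matrix (Fin n) (Fin n) ℝ} (hA : IsPRM A) (i : Fin n) :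
    A i i = 1 := by
  nlinarith [hA i i]

lemma Gbar_eq_of_diag_eq_one {n : ℕ} {A : Matrix (Fin n) (Fin n) ℝ} (hdiag : ∀ i, A i i = 1) :
    Gbar A = (n : ℝ) • 1 + diagonal (fun i => ∑ k, A k i ^ 2) - (A + Aᵀ) := by
  ext i j
  rcases eq_or_ne i j with rfl | hij
  · have hsum := Finset.add_sum_erase Finset.univ (fun k => A k i ^ 2) (Finset.mem_univ i)
    simp only [hdiag] at hsum
    simp [Gbar, Finset.filter_ne', hdiag]
    linarith
  · simp [Gbar, hij]

lemma wls_eq {n : ℕ} (A : Matrix (Fin n) (Fin n) ℝ) (x : Fin n → ℝ) :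
    wls A x = n * ∑ i, x i ^ 2 - 2 * (x ⬝ᵥ A *ᵥ x) + ∑ j, x j ^ 2 * ∑ i, A i j ^ 2 := by
  have hsq : ∑ i, ∑ j, (A i j * x j) ^ 2 = ∑ j, x j ^ 2 * ∑ i, A i j ^ 2 := by
    rw [Finset.sum_comm]
    simp [mul_pow, Finset.mul_sum, mul_comm]
  simp only [wls, sub_sq, Finset.sum_add_distrib, Finset.sum_sub_distrib, hsq]
  congr 2
  · simp [Finset.mul_sum]
  · simp [dotProduct, mulVec, Finset.mul_sum, mul_assoc]

lemma wls_eq_dotProduct_Gbar_mulVec {n : ℕ} {A : Matrix (Fin n) (Fin n) ℝ}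
    (hdiag : ∀ i, A i i = 1) (x : Fin n → ℝ) : wls A x = x ⬝ᵥ Gbar A *ᵥ x := by
  have htr : x ⬝ᵥ Aᵀ *ᵥ x = x ⬝ᵥ A *ᵥ x := by
    rw [dotProduct_mulVec, vecMul_transpose, dotProduct_comm]
  rw [wls_eq, Gbar_eq_of_diag_eq_one hdiag, sub_mulVec, add_mulVec, add_mulVec, dotProduct_sub,
    dotProduct_add, dotProduct_add, htr, smul_mulVec, one_mulVec]
  generalize x ⬝ᵥ A *ᵥ x = a
  simp only [dotProduct, mulVec_diagonal, Pi.smul_apply, smul_eq_mul]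
  rw [Finset.mul_sum]
  ring_nf

lemma wls_nonneg {n : ℕ} (A : Matrix (Fin n) (Fin n) ℝ) (x : Fin n → ℝ) : 0 ≤ wls A x := by
  unfold wls
  positivity

lemma wls_eq_zero_iff {n : ℕ} {A : Matrix (Fin n) (Fin n) ℝ} {x : Fin n → ℝ} :
    wls A x = 0 ↔ ∀ i j, x i = A i j * x j := by
  simp [wls, Finset.sum_eq_zero_iff_of_nonneg, sq_nonneg, Finset.sum_nonneg, sub_eq_zero]

lemma eq_zero_of_wls_eq_zero {n : ℕ} {A : Matrix (Fin n) (Fin n) ℝ} (hpos : ∀ i j, 0 < A i j)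
    {x : Fin n → ℝ} (hw : wls A x = 0) (hs : ∑ i, x i = 0) : x = 0 := by
  ext k
  have hsum : ∑ i, x i = (∑ i, A i k) * x k := by
    rw [Finset.sum_mul]
    exact Finset.sum_congr rfl fun i _ => wls_eq_zero_iff.mp hw i k
  have hcol : 0 < ∑ i, A i k := Finset.sum_pos (fun i _ => hpos i k) ⟨k, Finset.mem_univ k⟩
  rw [hs, eq_comm, mul_eq_zero] at hsum
  exact hsum.resolve_left hcol.ne'

lemma Jmat_mulVec {n : ℕ} (w : Fin n → ℝ) : Jmat n *ᵥ w = (∑ i, w i) • 1 := by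
  ext i
  simp [Jmat, mulVec, dotProduct]

lemma dotProduct_Gmat_mulVec {n : ℕ} {A : Matrix (Fin n) (Fin n) ℝ} (hdiag : ∀ i, A i i = 1)
    (x : Fin n → ℝ) : x ⬝ᵥ Gmat A *ᵥ x = wls A x + (∑ i, x i) ^ 2 := by
  rw [Gmat, add_mulVec, dotProduct_add, ← wls_eq_dotProduct_Gbar_mulVec hdiag, Jmat_mulVec,
    dotProduct_smul, smul_eq_mul, sq]
  simp [dotProduct]

lemma isSymm_Gmat {n : ℕ} (A : Matrix (Fin n) (Fin n) ℝ) : (Gmat A).IsSymm :=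
  IsSymm.ext fun i j => by
    rcases eq_or_ne i j with rfl | hij
    · rfl
    · simp [Gmat, Gbar, Jmat, hij, hij.symm, add_comm]

lemma posDef_Gmat {n : ℕ} {A : Matrix (Fin n) (Fin n) ℝ} (hpos : ∀ i j, 0 < A i j)
    (hdiag : ∀ i, A i i = 1) : (Gmat A).PosDef := by
  refine PosDef.of_dotProduct_mulVec_pos (isHermitian_iff_isSymm.mpr (isSymm_Gmat A)) ?_
  intro x hx
  rw [star_trivial, dotProduct_Gmat_mulVec hdiag]
  by_contra! hle
  have hw : wls A x = 0 := le_antisymm (by nlinarith [sq_nonneg (∑ i, x i)]) (wls_nonneg A x)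
  have hs : ∑ i, x i = 0 := pow_eq_zero_iff two_ne_zero |>.mp (by nlinarith [wls_nonneg A x])
  exact hx (eq_zero_of_wls_eq_zero hpos hw hs)

lemma Matrix.PosDef.sum_entries_pos {ι R : Type*} [Fintype ι] [Nonempty ι] [CommRing R]
    [PartialOrder R] [StarRing R] [Nontrivial R] {M : Matrix ι ι R} (hM : M.PosDef) :
    0 < ∑ i, ∑ j, M i j := by
  have h := hM.dotProduct_mulVec_pos (x := 1) one_ne_zero
  simpa [dotProduct, mulVec] using h

lemma Matrix.mulVec_eq_smul_one_and_sum_eq_one_iff {ι K : Type*} [Fintype ι] [DecidableEq ι]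
    [Field K] {G : Matrix ι ι K} (hG : IsUnit G.det) (hc : ∑ i, ∑ j, G⁻¹ i j ≠ 0)
    (w : ι → K) (μ : K) :
    G *ᵥ w = μ • 1 ∧ ∑ i, w i = 1 ↔
      w = (1 / ∑ i, ∑ j, G⁻¹ i j) • (G⁻¹ *ᵥ 1) ∧ μ = 1 / ∑ i, ∑ j, G⁻¹ i j := by
  set c := ∑ i, ∑ j, G⁻¹ i j
  have hsum : ∀ a : K, ∑ i, (a • (G⁻¹ *ᵥ 1)) i = a * c := fun a => by
    simp [c, mulVec, dotProduct, Finset.mul_sum]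
  have hsolve : G *ᵥ w = μ • 1 ↔ w = μ • (G⁻¹ *ᵥ 1) := by
    rw [← mulVec_smul]
    constructor
    · intro h
      rw [← h, mulVec_mulVec, nonsing_inv_mul _ hG, one_mulVec]
    · rintro rfl
      rw [mulVec_mulVec, mul_nonsing_inv _ hG, one_mulVec]
  rw [hsolve]
  constructor
  · rintro ⟨rfl, h⟩
    rw [hsum] at h
    have hμ : μ = 1 / c := eq_one_div_of_mul_eq_one_left h
    exact ⟨by rw [hμ], hμ⟩
  · rintro ⟨hw, rfl⟩
    exact ⟨hw, by rw [hw, hsum, one_div_mul_cancel hc]⟩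

lemma add_smul_Jmat_mulVec_add_smul_one_eq_zero_iff {n : ℕ} (B : Matrix (Fin n) (Fin n) ℝ)
    (r l : ℝ) (w : Fin n → ℝ) :
    (B + r • Jmat n) *ᵥ w + l • 1 = 0 ∧ ∑ i, w i = 1 ↔
      (B + Jmat n) *ᵥ w = (1 - r - l) • 1 ∧ ∑ i, w i = 1 := by
  refine and_congr_left fun hs => ?_
  have hsmul : (1 - r - l) • (1 : Fin n → ℝ) - 1 = -((r + l) • 1) := by module
  rw [add_mulVec, add_mulVec, smul_mulVec, Jmat_mulVec, hs, one_smul, add_assoc, ← add_smul,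
    add_eq_zero_iff_eq_neg, ← eq_sub_iff_add_eq, hsmul]

/-- shift invariance of the Lagrange system: for every `r : ℝ`, the
system `(Ḡ + r·J).mulVec w + λ • 1 = 0`, `∑ i, w i = 1` has a unique solution `(w, λ)`;
its `w`-component is `w*` independently of `r`, while `λ = (1 − 1/c) − r`. -/
theorem lagrangian_igm_shift_invariance {n : ℕ} (hn : 1 ≤ n)
    (A : Matrix (Fin n) (Fin n) ℝ) (hA : IsPRM A) (r : ℝ) :
    let c : ℝ := ∑ i, ∑ j, (Gmat A)⁻¹ i j
    let wstar : Fin n → ℝ := (1 / c) • ((Gmat A)⁻¹.mulVec 1)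
    (∃! p : (Fin n → ℝ) × ℝ,
      (Gbar A + r • Jmat n).mulVec p.1 + p.2 • (1 : Fin n → ℝ) = 0 ∧ ∑ i, p.1 i = 1) ∧
    (∀ p : (Fin n → ℝ) × ℝ,
      ((Gbar A + r • Jmat n).mulVec p.1 + p.2 • (1 : Fin n → ℝ) = 0 ∧ ∑ i, p.1 i = 1) →
        p.1 = wstar ∧ p.2 = (1 - 1 / c) - r) := by
  intro c wstar
  have : Nonempty (Fin n) := Fin.pos_iff_nonempty.mp hn
  have hG : (Gmat A).PosDef := posDef_Gmat (fun i j => (hA i j).1) hA.diag_eq_one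
  have hc : 0 < c := hG.inv.sum_entries_pos
  have hsys : ∀ p : (Fin n → ℝ) × ℝ,
      (Gbar A + r • Jmat n) *ᵥ p.1 + p.2 • 1 = 0 ∧ ∑ i, p.1 i = 1 ↔
        p.1 = wstar ∧ p.2 = 1 - 1 / c - r := fun ⟨w, l⟩ => by
    rw [add_smul_Jmat_mulVec_add_smul_one_eq_zero_iff]
    refine (mulVec_eq_smul_one_and_sum_eq_one_iff (G := Gmat A) hG.det_pos.ne'.isUnit hc.ne' w _
      |>.trans ?_)
    exact and_congr_right' ⟨fun h => by linarith, fun h => by linarith⟩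
  refine ⟨⟨(wstar, 1 - 1 / c - r), (hsys _).2 ⟨rfl, rfl⟩, fun p hp => ?_⟩, fun p => (hsys p).1⟩
  obtain ⟨hw, hl⟩ := (hsys p).1 hp
  exact Prod.ext hw hl
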